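/- For all natural numbers d, p ≥ 1, all Q_1, …, Q_t, K_1, …, K_t ∈ ℝ^d and V_1, …, V_t ∈ ℝ^v, power attention equals linear attention with the symmetric-power feature map: for every 1 ≤ i ≤ t, Σ_{j=1}^{i} (⟨Q_i, K_j⟩)^p V_j = S_i spow_p(Q_i), where S_i = Σ_{j=1}^{i} V_j spow_p(K_j)^T ∈ ℝ^{v×C(d+p−1,p)}. In particular, power attention admits a recurrent computation with a fixed state of size v · C(d+p−1, p). -/

import Mathlib

/-!
Expanding `⟨x, y⟩ ^ p` by the multinomial theorem gives a sum over exponent vectors `α` with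
`∑ α = p`, with coefficient `p! / ∏ α_k!` and monomial `∏ (x_k y_k) ^ α_k`. A non-decreasing
multi-index is determined by its histogram, and every exponent vector is the histogram of one
(sort the multiset it describes), so these terms are indexed by the monotone maps
`Fin p → Fin d`. The factor `√(p! / ∏ hist_k!)` in `spow` splits the coefficient evenly between
`x` and `y`, so `⟨x, y⟩ ^ p = ⟨spow_p x, spow_p y⟩`, and the theorem follows by linearity in `V`.
-/

open scoped Classical

/-- hist_k(i): the number of positions j with i_j = k. -/
def hist {p d : ℕ} (i : Fin p → Fin d) (k : Fin d) : ℕ :=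
  (Finset.univ.filter (fun j => i j = k)).card

/-- The symmetric power embedding spow_p : ℝ^d → ℝ^{|NDMI^p_d|}, indexed by
non-decreasing multi-indices (monotone functions Fin p → Fin d), with entry
√(p! / ∏_k hist_k(i)!) · ∏_j x_{i_j}. -/
noncomputable def spow {d : ℕ} (p : ℕ) (x : Fin d → ℝ)
    (i : {f : Fin p → Fin d // Monotone f}) : ℝ :=
  Real.sqrt ((p.factorial : ℝ) / ∏ k, ((hist i.1 k).factorial : ℝ)) * ∏ j, x (i.1 j)

open Finset

section Histogram

variable {p d : ℕ}

lemma sum_hist (f : Fin p → Fin d) : ∑ k, hist f k = p := by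
  simp only [hist]
  rw [← card_eq_sum_card_fiberwise fun j _ => mem_univ (f j)]
  simp

lemma hist_eq_count (f : Fin p → Fin d) (k : Fin d) : hist f k = (List.ofFn f).count k := by
  rw [← Multiset.coe_count, ← Fin.univ_val_map, Multiset.count_map, hist, card_def, filter_val]
  simp only [eq_comm]

lemma prod_comp_eq_prod_pow_hist {M : Type*} [CommMonoid M] (f : Fin p → Fin d) (g : Fin d → M) :
    ∏ j, g (f j) = ∏ k, g k ^ hist f k := by
  rw [← prod_fiberwise_of_maps_to (g := f) (t := univ) fun j _ => mem_univ (f j)]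
  refine prod_congr rfl fun k _ => ?_
  rw [prod_congr rfl fun j hj => congrArg g (mem_filter.mp hj).2, prod_const, hist]

theorem Monotone.eq_of_hist_eq {f g : Fin p → Fin d} (hf : Monotone f) (hg : Monotone g)
    (h : hist f = hist g) : f = g := by
  rw [← List.ofFn_inj]
  refine List.Perm.eq_of_sortedLE (List.sortedLE_ofFn_iff.2 hf) (List.sortedLE_ofFn_iff.2 hg) ?_
  exact List.perm_iff_count.2 fun k => by rw [← hist_eq_count, ← hist_eq_count, h]

lemma exists_monotone_hist_eq (h : Fin d → ℕ) (hs : ∑ k, h k = p) :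
    ∃ f : Fin p → Fin d, Monotone f ∧ hist f = h := by
  set m := Finsupp.toMultiset (Finsupp.equivFunOnFinite.symm h)
  set l := m.sort (· ≤ ·)
  obtain rfl : l.length = p := by
    rw [Multiset.length_sort, Finsupp.card_toMultiset, ← hs, Finsupp.sum_fintype _ _ fun _ => rfl]
    rfl
  refine ⟨l.get, ?_, funext fun k => ?_⟩
  · rw [← List.sortedLE_ofFn_iff, List.ofFn_get, List.sortedLE_iff_pairwise]
    exact Multiset.pairwise_sort _ _
  · rw [hist_eq_count, List.ofFn_get, ← Multiset.coe_count, Multiset.sort_eq,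
      Finsupp.count_toMultiset, Finsupp.coe_equivFunOnFinite_symm]

lemma multinomial_hist_eq (f : Fin p → Fin d) :
    (Nat.multinomial univ (hist f) : ℝ) = p.factorial / ∏ k, ((hist f k).factorial : ℝ) := by
  have hspec := Nat.multinomial_spec univ (hist f)
  rw [sum_hist] at hspec
  rw [eq_div_iff (by positivity), mul_comm]
  exact_mod_cast hspec

end Histogram

lemma spow_mul_spow {d p : ℕ} (x y : Fin d → ℝ) (i : {f : Fin p → Fin d // Monotone f}) :
    spow p x i * spow p y i
      = Nat.multinomial univ (hist i.1) * ∏ k, (x k * y k) ^ hist i.1 k := by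
  rw [spow, spow, mul_mul_mul_comm, Real.mul_self_sqrt (by positivity), ← multinomial_hist_eq,
    ← prod_mul_distrib, prod_comp_eq_prod_pow_hist i.1 fun k => x k * y k]

theorem dotProduct_pow_eq_sum_spow_mul_spow {d : ℕ} (p : ℕ) (x y : Fin d → ℝ) :
    (∑ k, x k * y k) ^ p = ∑ i : {f : Fin p → Fin d // Monotone f}, spow p x i * spow p y i := by
  rw [sum_pow_eq_sum_piAntidiag]
  symm
  refine sum_bij (fun i _ => hist i.1) (fun i _ => ?_) (fun i _ j _ hij => ?_) (fun h hh => ?_)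
    fun i _ => spow_mul_spow x y i
  · exact mem_piAntidiag.2 ⟨sum_hist i.1, fun k _ => mem_univ k⟩
  · exact Subtype.ext (i.2.eq_of_hist_eq j.2 hij)
  · obtain ⟨f, hf, rfl⟩ := exists_monotone_hist_eq h (mem_piAntidiag.1 hh).1
    exact ⟨⟨f, hf⟩, mem_univ _, rfl⟩

theorem power_attention_eq_linear_attention_spow_general
    (d p v t : ℕ)
    (Q K : ℕ → Fin d → ℝ) (V : ℕ → Fin v → ℝ) :
    ∀ i : ℕ, 1 ≤ i → i ≤ t → ∀ a : Fin v,
      ∑ j ∈ Finset.Icc 1 i, (∑ b, Q i b * K j b) ^ p * V j a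
        = ∑ idx : {f : Fin p → Fin d // Monotone f},
            (∑ j ∈ Finset.Icc 1 i, V j a * spow p (K j) idx) * spow p (Q i) idx := by
  intro i _ _ a
  simp_rw [dotProduct_pow_eq_sum_spow_mul_spow, sum_mul]
  rw [sum_comm]
  refine sum_congr rfl fun j _ => sum_congr rfl fun idx _ => ?_
  ring

/-- Power attention equals linear attention with the
symmetric-power feature map: for 1 ≤ i ≤ t,
Σ_{j=1}^{i} (⟨Q_i, K_j⟩)^p V_j = S_i spow_p(Q_i), where
S_i = Σ_{j=1}^{i} V_j spow_p(K_j)^T.  Hence power attention admits a recurrent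
computation with a fixed state of size v · C(d+p−1, p). -/
theorem power_attention_eq_linear_attention_spow
    (d p v t : ℕ) (hd : 1 ≤ d) (hp : 1 ≤ p)
    (Q K : ℕ → Fin d → ℝ) (V : ℕ → Fin v → ℝ) :
    ∀ i : ℕ, 1 ≤ i → i ≤ t → ∀ a : Fin v,
      ∑ j ∈ Finset.Icc 1 i, (∑ b, Q i b * K j b) ^ p * V j a
        = ∑ idx : {f : Fin p → Fin d // Monotone f},
            (∑ j ∈ Finset.Icc 1 i, V j a * spow p (K j) idx) * spow p (Q i) idx :=
  power_attention_eq_linear_attention_spow_general d p v t Q K V
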